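/- arXiv:2407.20400 — 4 statements merged into one kernel-verified Lean document; each statement's English description precedes it below -/
import Mathlib

section
/- With L_n as defined, the map F_n : L_n → ℂ² given on a point P with Y_{1,i} + Y_{1,i+1} + Y_{2,j} + Y_{2,j+1} = 1 by F_n(P) = (e^{2πi·(i/n)} f_n(Y_{1,i}, Y_{1,i+1}), e^{2πi·(j/n)} f_n(Y_{2,j}, Y_{2,j+1})) is well defined: its value does not depend on the choice of admissible indices i, j. -/
open Complex

/-- `fTri n (x₁, x₂) = sin((π/2)(x₁+x₂)) · exp((2πi/n)·(x₂/(x₁+x₂)))` for `(x₁,x₂) ≠ (0,0)`,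
and `fTri n (0,0) = 0`. -/
noncomputable def fTri (n : ℕ) (p : ℝ × ℝ) : ℂ :=
  if p = (0, 0) then 0
  else ((Real.sin (Real.pi / 2 * (p.1 + p.2)) : ℝ) : ℂ) *
    Complex.exp (2 * Real.pi * Complex.I / n * ((p.2 / (p.1 + p.2) : ℝ) : ℂ))

/-- `(i,·)` is admissible for `Y` in the group `μ`: the support of `Y (μ, ·)` is contained
in the consecutive pair `{i, i+1}` of `ℤ/nℤ`. -/
def Adm (n : ℕ) (Y : Fin 2 × ZMod n → ℝ) (μ : Fin 2) (i : ZMod n) : Prop :=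
  ∀ j : ZMod n, Y (μ, j) ≠ 0 → j = i ∨ j = i + 1

/-- `L_n ⊆ ℝ^{2n}`: nonnegative points, with coordinates indexed by `{1,2} × ℤ/nℤ`,
summing to `1`, whose support in each `μ`-group is contained in a consecutive pair mod `n`. -/
def Ln (n : ℕ) [NeZero n] : Set (Fin 2 × ZMod n → ℝ) :=
  {Y | (∀ p, 0 ≤ Y p) ∧ (∑ p, Y p) = 1 ∧ ∀ μ : Fin 2, ∃ i : ZMod n, Adm n Y μ i}

/-- The `μ`-component of `F_n` computed with the admissible index `i`:
`e^{2πi·(i/n)} · f_n(Y_{μ,i}, Y_{μ,i+1})`. -/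
noncomputable def Fcomp (n : ℕ) [NeZero n] (Y : Fin 2 × ZMod n → ℝ) (μ : Fin 2)
    (i : ZMod n) : ℂ :=
  Complex.exp (2 * Real.pi * Complex.I * ((i.val : ℂ) / n)) * fTri n (Y (μ, i), Y (μ, i + 1))

/-!
Two distinct admissible indices for the same group overlap in at least one position. If they are
neighbours `i`, `i + 1`, then (as `n ≥ 3`) the support lies in `{i + 1}`, and with `a = Y_{μ,i+1}`
the two candidate values are `e^{2πi i/n} f_n(0, a)` and `e^{2πi (i+1)/n} f_n(a, 0)`; these agree
because the phase of `f_n(0, a)` is exactly `e^{2πi/n}`. Otherwise the two pairs are disjoint, the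
whole group vanishes and both values are `f_n(0, 0) = 0`.
-/

lemma ZMod.natCast_ne_zero_of_pos_of_lt {n k : ℕ} (hk₀ : 0 < k) (hk : k < n) :
    (k : ZMod n) ≠ 0 := by
  simp [ZMod.natCast_eq_zero_iff, Nat.not_dvd_of_pos_of_lt hk₀ hk]

lemma fTri_zero_left (n : ℕ) (a : ℝ) :
    fTri n (0, a) = (Real.sin (Real.pi / 2 * a) : ℂ) * exp (2 * Real.pi * I / n) := by
  rcases eq_or_ne a 0 with rfl | ha <;> simp [fTri, *]

lemma fTri_zero_right (n : ℕ) (a : ℝ) : fTri n (a, 0) = (Real.sin (Real.pi / 2 * a) : ℂ) := by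
  rcases eq_or_ne a 0 with rfl | ha <;> simp [fTri, *]

lemma Fcomp_eq_stdAddChar_mul (n : ℕ) [NeZero n] (Y : Fin 2 × ZMod n → ℝ) (μ : Fin 2)
    (i : ZMod n) : Fcomp n Y μ i = ZMod.stdAddChar i * fTri n (Y (μ, i), Y (μ, i + 1)) := by
  rw [Fcomp, ZMod.stdAddChar_apply, ZMod.toCircle_apply, mul_div_assoc]

lemma Fcomp_eq_Fcomp_add_one {n : ℕ} [NeZero n] {Y : Fin 2 × ZMod n → ℝ} {μ : Fin 2}
    {i : ZMod n} (h₀ : Y (μ, i) = 0) (h₂ : Y (μ, i + 2) = 0) :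
    Fcomp n Y μ i = Fcomp n Y μ (i + 1) := by
  have hstep : ZMod.stdAddChar (i + 1) = ZMod.stdAddChar i * exp (2 * Real.pi * I / n) := by
    rw [AddChar.map_add_eq_mul, ← Int.cast_one, ZMod.stdAddChar_coe, Int.cast_one, mul_one]
  rw [Fcomp_eq_stdAddChar_mul, Fcomp_eq_stdAddChar_mul, add_assoc, one_add_one_eq_two, h₀, h₂,
    fTri_zero_left, fTri_zero_right, hstep]
  ring

lemma Fcomp_eq_zero {n : ℕ} [NeZero n] {Y : Fin 2 × ZMod n → ℝ} {μ : Fin 2} {i : ZMod n}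
    (h₀ : Y (μ, i) = 0) (h₁ : Y (μ, i + 1) = 0) : Fcomp n Y μ i = 0 := by
  simp [Fcomp, fTri, h₀, h₁]

namespace Adm

variable {n : ℕ} {Y : Fin 2 × ZMod n → ℝ} {μ : Fin 2} {i : ZMod n}

lemma apply_eq_zero (hi : Adm n Y μ i) {j : ZMod n} (hj₀ : j ≠ i) (hj₁ : j ≠ i + 1) :
    Y (μ, j) = 0 := by
  by_contra hj
  exact (hi j hj).elim hj₀ hj₁

lemma Fcomp_eq_zero [NeZero n] {i' : ZMod n} (hi' : Adm n Y μ i') (h₀ : i ≠ i')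
    (h₁ : i ≠ i' + 1) (h₂ : i + 1 ≠ i') : Fcomp n Y μ i = 0 :=
  _root_.Fcomp_eq_zero (hi'.apply_eq_zero h₀ h₁)
    (hi'.apply_eq_zero h₂ (by simpa only [ne_eq, add_left_inj] using h₀))

lemma apply_eq_zero_of_add_one (hn : 3 ≤ n) (hi : Adm n Y μ i) (hi' : Adm n Y μ (i + 1)) :
    Y (μ, i) = 0 ∧ Y (μ, i + 2) = 0 := by
  have h₁ : (1 : ZMod n) ≠ 0 := by
    exact_mod_cast ZMod.natCast_ne_zero_of_pos_of_lt one_pos (by omega)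
  have h₂ : (2 : ZMod n) ≠ 0 := by
    exact_mod_cast ZMod.natCast_ne_zero_of_pos_of_lt two_pos (by omega)
  exact ⟨hi'.apply_eq_zero (fun h => h₁ (by linear_combination -h))
      (fun h => h₂ (by linear_combination -h)),
    hi.apply_eq_zero (fun h => h₂ (by linear_combination h))
      (fun h => h₁ (by linear_combination h))⟩

end Adm

/-- the map `F_n` is well defined on `L_n`: its value does not depend on the
choice of admissible indices. -/
theorem Fcomp_welldefined (n : ℕ) [NeZero n] (hn : 3 ≤ n) :
    ∀ Y ∈ Ln n, ∀ (μ : Fin 2) (i i' : ZMod n),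
      Adm n Y μ i → Adm n Y μ i' → Fcomp n Y μ i = Fcomp n Y μ i' := by
  intro Y _ μ i i' hi hi'
  by_cases hsucc : i' = i + 1
  · subst hsucc
    obtain ⟨h₀, h₂⟩ := hi.apply_eq_zero_of_add_one hn hi'
    exact Fcomp_eq_Fcomp_add_one h₀ h₂
  by_cases hpred : i = i' + 1
  · subst hpred
    obtain ⟨h₀, h₂⟩ := hi'.apply_eq_zero_of_add_one hn hi
    exact (Fcomp_eq_Fcomp_add_one h₀ h₂).symm
  by_cases heq : i = i'
  · rw [heq]
  rw [hi'.Fcomp_eq_zero heq hpred (Ne.symm hsucc),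
    hi.Fcomp_eq_zero (Ne.symm heq) hsucc (Ne.symm hpred)]
end

section
/- Every value of F_n lies on the unit sphere S³ = {(z,w) ∈ ℂ² : |z|² + |w|² = 1}. -/
open Complex

/-! Both phase factors have modulus one, so `‖F_n(P)‖²` is `sin²(π s₁/2) + sin²(π s₂/2)`, where
`s_μ` is the total mass of the `μ`-group. Since the support of each group lies in its admissible
pair, `s₁ + s₂ = 1`, and `sin(π s₂/2) = cos(π s₁/2)`. -/

lemma norm_fTri (n : ℕ) (p : ℝ × ℝ) :
    ‖fTri n p‖ = |Real.sin (Real.pi / 2 * (p.1 + p.2))| := by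
  unfold fTri
  split_ifs with h
  · simp [h]
  · have hphase : 2 * Real.pi * I / n * ((p.2 / (p.1 + p.2) : ℝ) : ℂ) =
        ((2 * Real.pi / n * (p.2 / (p.1 + p.2)) : ℝ) : ℂ) * I := by
      push_cast; ring
    rw [norm_mul, norm_real, Real.norm_eq_abs, hphase, norm_exp_ofReal_mul_I, mul_one]

lemma norm_Fcomp (n : ℕ) [NeZero n] (Y : Fin 2 × ZMod n → ℝ) (μ : Fin 2) (i : ZMod n) :
    ‖Fcomp n Y μ i‖ = |Real.sin (Real.pi / 2 * (Y (μ, i) + Y (μ, i + 1)))| := by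
  have hphase : 2 * Real.pi * I * ((i.val : ℂ) / n) =
      ((2 * Real.pi * (i.val / n) : ℝ) : ℂ) * I := by
    push_cast; ring
  rw [Fcomp, norm_mul, hphase, norm_exp_ofReal_mul_I, one_mul, norm_fTri]

lemma sum_eq_of_adm {n : ℕ} [NeZero n] (hn : 1 < n) {Y : Fin 2 × ZMod n → ℝ} {μ : Fin 2}
    {i : ZMod n} (h : Adm n Y μ i) : ∑ l, Y (μ, l) = Y (μ, i) + Y (μ, i + 1) := by
  have : Fact (1 < n) := ⟨hn⟩
  refine Fintype.sum_eq_add i (i + 1) (by simp) fun l hl => ?_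
  by_contra hl0
  exact (h l hl0).elim hl.1 hl.2

lemma sin_sq_add_sin_sq_of_add_eq_one {a b : ℝ} (h : a + b = 1) :
    Real.sin (Real.pi / 2 * a) ^ 2 + Real.sin (Real.pi / 2 * b) ^ 2 = 1 := by
  obtain rfl : b = 1 - a := by linarith
  rw [show Real.pi / 2 * (1 - a) = Real.pi / 2 - Real.pi / 2 * a by ring,
    Real.sin_pi_div_two_sub, Real.sin_sq_add_cos_sq]

/-- every value of `F_n` lies on the unit sphere
`S³ = {(z,w) ∈ ℂ² : |z|² + |w|² = 1}`. -/
theorem Fn_mem_sphere (n : ℕ) [NeZero n] (hn : 3 ≤ n) :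
    ∀ Y ∈ Ln n, ∀ i j : ZMod n, Adm n Y 0 i → Adm n Y 1 j →
      ‖Fcomp n Y 0 i‖ ^ 2 + ‖Fcomp n Y 1 j‖ ^ 2 = 1 := by
  rintro Y ⟨-, hsum, -⟩ i j hi hj
  have hmass : Y (0, i) + Y (0, i + 1) + (Y (1, j) + Y (1, j + 1)) = 1 := by
    rw [← sum_eq_of_adm (by omega) hi, ← sum_eq_of_adm (by omega) hj, ← hsum,
      Fintype.sum_prod_type, Fin.sum_univ_two]
  rw [norm_Fcomp, norm_Fcomp, sq_abs, sq_abs]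
  exact sin_sq_add_sin_sq_of_add_eq_one hmass
end

section
/- The map F_n : L_n → S³ is injective. -/
open Complex

/-!
On the `μ`-group, supported on `{i, i + 1}`, the component of `F_n` is
`sin (π s / 2) · e^{2πi a / n}` with mass `s = Y_{μ,i} + Y_{μ,i+1} ∈ [0, 1]` and barycentre
`a = i + Y_{μ,i+1} / s`. The modulus determines `s`, because `sin` is injective on `[0, π/2]`;
if `s > 0` the argument determines `a` modulo `n`. The group is then recovered as mass
`s (1 - fract a)` at `⌊a⌋` and `s · fract a` at `⌊a⌋ + 1`, an expression that is `n`-periodic in `a`.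
-/

noncomputable def spread (n : ℕ) (s a : ℝ) : ZMod n → ℝ :=
  Pi.single ((⌊a⌋ : ℤ) : ZMod n) (s * (1 - Int.fract a)) +
    Pi.single ((⌊a⌋ + 1 : ℤ) : ZMod n) (s * Int.fract a)

section spread

variable {n : ℕ}

@[simp]
lemma spread_zero (a : ℝ) : spread n 0 a = 0 := by
  simp [spread]

lemma spread_add_int_mul (s a : ℝ) (m : ℤ) : spread n s (a + m * n) = spread n s a := by
  have hmn : (m : ℝ) * n = ((m * n : ℤ) : ℝ) := by push_cast; ring
  have hcast : ((m * n : ℤ) : ZMod n) = 0 := by simp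
  simp only [spread, hmn, Int.floor_add_intCast, Int.fract_add_intCast, Int.cast_add, hcast,
    add_zero]

lemma spread_intCast_add (s : ℝ) (k : ℤ) {t : ℝ} (ht₀ : 0 ≤ t) (ht₁ : t ≤ 1) :
    spread n s (k + t) =
      Pi.single (k : ZMod n) (s * (1 - t)) + Pi.single ((k + 1 : ℤ) : ZMod n) (s * t) := by
  rcases ht₁.lt_or_eq with ht₁ | rfl
  · simp [spread, Int.floor_eq_zero_iff.2 ⟨ht₀, ht₁⟩, Int.fract_eq_self.2 ⟨ht₀, ht₁⟩]
  · rw [show (k : ℝ) + 1 = ((k + 1 : ℤ) : ℝ) by push_cast; ring]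
    simp [spread]

lemma eq_spread [NeZero n] [Nontrivial (ZMod n)] {Z : ZMod n → ℝ} (hZ : ∀ j, 0 ≤ Z j)
    {i : ZMod n} (hsupp : ∀ j, Z j ≠ 0 → j = i ∨ j = i + 1) :
    Z = spread n (Z i + Z (i + 1)) (i.val + Z (i + 1) / (Z i + Z (i + 1))) := by
  set s := Z i + Z (i + 1) with hs
  have hs₀ : 0 ≤ s := add_nonneg (hZ i) (hZ _)
  have hst : s * (Z (i + 1) / s) = Z (i + 1) := by
    rcases hs₀.eq_or_lt with hs₀ | hs₀
    · rw [← hs₀, zero_mul]; linarith [hZ i, hZ (i + 1)]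
    · exact mul_div_cancel₀ _ hs₀.ne'
  have hi : ((i.val : ℤ) : ZMod n) = i := by simp
  rw [show (i.val : ℝ) = ((i.val : ℤ) : ℝ) by norm_cast,
    spread_intCast_add s _ (div_nonneg (hZ _) hs₀) (div_le_one_of_le₀ (by linarith [hZ i]) hs₀),
    mul_one_sub, hst, Int.cast_add, hi, Int.cast_one, hs, add_sub_cancel_right]
  ext j
  by_cases hj : j = i
  · subst hj; simp
  by_cases hj' : j = i + 1
  · subst hj'; simp
  · simp only [Pi.add_apply, Pi.single_apply, hj, hj', if_false, add_zero]
    by_contra h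
    exact (hsupp j h).elim hj hj'

end spread

lemma fTri_eq (n : ℕ) (x₁ x₂ : ℝ) :
    fTri n (x₁, x₂) = (Real.sin (Real.pi / 2 * (x₁ + x₂)) : ℂ) *
      exp (2 * Real.pi * I / n * ((x₂ / (x₁ + x₂) : ℝ) : ℂ)) := by
  rw [fTri]
  split_ifs with h
  · simp_all
  · rfl

lemma exp_mul_fTri (n v : ℕ) (x₁ x₂ : ℝ) :
    exp (2 * Real.pi * I * ((v : ℂ) / n)) * fTri n (x₁, x₂) =
      (Real.sin (Real.pi / 2 * (x₁ + x₂)) : ℂ) *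
        exp (2 * Real.pi * I * (((v + x₂ / (x₁ + x₂)) / n : ℝ) : ℂ)) := by
  rw [fTri_eq, mul_left_comm, ← Complex.exp_add]
  push_cast
  ring_nf

lemma eq_and_exists_int_of_ofReal_mul_exp_eq {r r' x x' : ℝ} (hr : 0 ≤ r) (hr' : 0 ≤ r')
    (h : (r : ℂ) * exp (2 * Real.pi * I * x) = r' * exp (2 * Real.pi * I * x')) :
    r = r' ∧ (r ≠ 0 → ∃ m : ℤ, x = x' + m) := by
  have hnorm : ∀ r x : ℝ, ‖(r : ℂ) * exp (2 * Real.pi * I * x)‖ = |r| := fun r x ↦ by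
    rw [norm_mul, Complex.norm_real, Real.norm_eq_abs, Complex.norm_exp]
    simp
  have hrr' : r = r' := by
    simpa only [hnorm, abs_of_nonneg hr, abs_of_nonneg hr'] using congrArg norm h
  refine ⟨hrr', fun hr₀ ↦ ?_⟩
  subst hrr'
  obtain ⟨m, hm⟩ := Complex.exp_eq_exp_iff_exists_int.1 (mul_left_cancel₀ (by exact_mod_cast hr₀) h)
  refine ⟨m, Complex.ofReal_injective ?_⟩
  have h2πI : 2 * (Real.pi : ℂ) * I ≠ 0 := by simp [Real.pi_ne_zero]
  apply mul_left_cancel₀ h2πI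
  push_cast
  linear_combination hm

lemma sin_half_pi_mul_nonneg {s : ℝ} (hs : s ∈ Set.Icc 0 1) : 0 ≤ Real.sin (Real.pi / 2 * s) :=
  Real.sin_nonneg_of_nonneg_of_le_pi (by nlinarith [Real.pi_pos, hs.1])
    (by nlinarith [Real.pi_pos, hs.2])

lemma sin_half_pi_mul_pos {s : ℝ} (hs₀ : 0 < s) (hs₁ : s ≤ 1) : 0 < Real.sin (Real.pi / 2 * s) :=
  Real.sin_pos_of_pos_of_lt_pi (by positivity) (by nlinarith [Real.pi_pos])

lemma sin_half_pi_mul_injOn : Set.InjOn (fun s ↦ Real.sin (Real.pi / 2 * s)) (Set.Icc 0 1) := by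
  intro s hs s' hs' h
  have hmem : ∀ s ∈ Set.Icc (0 : ℝ) 1, Real.pi / 2 * s ∈ Set.Icc (-(Real.pi / 2)) (Real.pi / 2) :=
    fun s hs ↦ ⟨by nlinarith [Real.pi_pos, hs.1], by nlinarith [Real.pi_pos, hs.2]⟩
  exact mul_left_cancel₀ (by positivity) (Real.injOn_sin (hmem s hs) (hmem s' hs') h)

lemma add_le_one_of_mem_Ln {n : ℕ} [NeZero n] [Nontrivial (ZMod n)]
    {Y : Fin 2 × ZMod n → ℝ} (hY : Y ∈ Ln n) (μ : Fin 2) (k : ZMod n) :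
    Y (μ, k) + Y (μ, k + 1) ≤ 1 := by
  obtain ⟨hY₀, hY₁, -⟩ := hY
  have hne : ((μ, k) : Fin 2 × ZMod n) ≠ (μ, k + 1) := by simp
  calc Y (μ, k) + Y (μ, k + 1) = ∑ p ∈ {(μ, k), (μ, k + 1)}, Y p := (Finset.sum_pair hne).symm
    _ ≤ ∑ p, Y p := Finset.sum_le_sum_of_subset_of_nonneg (Finset.subset_univ _) fun p _ _ ↦ hY₀ p
    _ = 1 := hY₁

lemma apply_eq_of_Fcomp_eq {n : ℕ} [NeZero n] [Nontrivial (ZMod n)] {Y Y' : Fin 2 × ZMod n → ℝ}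
    (hY : Y ∈ Ln n) (hY' : Y' ∈ Ln n) {μ : Fin 2} {i i' : ZMod n} (hi : Adm n Y μ i)
    (hi' : Adm n Y' μ i') (h : Fcomp n Y μ i = Fcomp n Y' μ i') (k : ZMod n) :
    Y (μ, k) = Y' (μ, k) := by
  have hZ := eq_spread (Z := fun k ↦ Y (μ, k)) (fun _ ↦ hY.1 _) hi
  have hZ' := eq_spread (Z := fun k ↦ Y' (μ, k)) (fun _ ↦ hY'.1 _) hi'
  have hs : Y (μ, i) + Y (μ, i + 1) ∈ Set.Icc 0 1 :=
    ⟨add_nonneg (hY.1 _) (hY.1 _), add_le_one_of_mem_Ln hY μ i⟩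
  have hs' : Y' (μ, i') + Y' (μ, i' + 1) ∈ Set.Icc 0 1 :=
    ⟨add_nonneg (hY'.1 _) (hY'.1 _), add_le_one_of_mem_Ln hY' μ i'⟩
  rw [Fcomp, Fcomp, exp_mul_fTri, exp_mul_fTri] at h
  set s := Y (μ, i) + Y (μ, i + 1)
  set s' := Y' (μ, i') + Y' (μ, i' + 1)
  clear_value s s'
  obtain ⟨hsin, hangle⟩ := eq_and_exists_int_of_ofReal_mul_exp_eq
    (sin_half_pi_mul_nonneg hs) (sin_half_pi_mul_nonneg hs') h
  obtain rfl : s = s' := sin_half_pi_mul_injOn hs hs' hsin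
  refine congrFun (hZ.trans (Eq.trans ?_ hZ'.symm)) k
  rcases hs.1.eq_or_lt with hs₀ | hs₀
  · simp only [← hs₀, spread_zero]
  obtain ⟨m, hm⟩ := hangle (sin_half_pi_mul_pos hs₀ hs.2).ne'
  have hn : (n : ℝ) ≠ 0 := Nat.cast_ne_zero.2 (NeZero.ne n)
  rw [div_eq_iff hn, add_mul, div_mul_cancel₀ _ hn] at hm
  rw [hm, spread_add_int_mul]

/-- the map `F_n : L_n → S³` is injective. -/
theorem Fn_injective (n : ℕ) [NeZero n] (hn : 3 ≤ n) :
    ∀ Y ∈ Ln n, ∀ Y' ∈ Ln n, ∀ i j i' j' : ZMod n,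
      Adm n Y 0 i → Adm n Y 1 j → Adm n Y' 0 i' → Adm n Y' 1 j' →
      Fcomp n Y 0 i = Fcomp n Y' 0 i' → Fcomp n Y 1 j = Fcomp n Y' 1 j' → Y = Y' := by
  intro Y hY Y' hY' i j i' j' hi hj hi' hj' h₀ h₁
  have : Fact (1 < n) := ⟨by omega⟩
  ext ⟨μ, k⟩
  fin_cases μ
  · exact apply_eq_of_Fcomp_eq hY hY' hi hi' h₀ k
  · exact apply_eq_of_Fcomp_eq hY hY' hj hj' h₁ k
end

section
/- The map F_n : L_n → S³ is surjective. -/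
open Complex

/-! Both moduli are matched by one parameter `t ∈ [0,1]` with `sin(πt/2) = ‖z‖` and
`cos(πt/2) = ‖w‖`, so the masses `t` and `1 - t` of the two groups add up to `1`. For the
phase, write `n · arg z / 2π = m + s` with `m ∈ ℤ` and `s ∈ [0,1)`: splitting the mass `t` as
`(t(1-s), ts)` over the consecutive pair `(m, m+1)` of `ℤ/nℤ` produces
`e^{2πim/n} · e^{2πis/n} = e^{i arg z}`. -/

open scoped Real

theorem fTri_mul_one_sub_mul (n : ℕ) (t s : ℝ) :
    fTri n (t * (1 - s), t * s) = Real.sin (π / 2 * t) * exp (2 * π * I / n * s) := by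
  have hsum : t * (1 - s) + t * s = t := by ring
  by_cases ht : t = 0
  · simp [fTri, ht]
  · have hne : (t * (1 - s), t * s) ≠ (0, 0) := fun h ↦ by
      obtain ⟨h₁, h₂⟩ := Prod.mk.inj h
      exact ht (by rw [← hsum, h₁, h₂, add_zero])
    rw [fTri, if_neg hne, hsum, mul_div_cancel_left₀ s ht]

theorem exp_zmod_val_mul_exp_fract (n : ℕ) [NeZero n] (x : ℝ) :
    exp (2 * π * I * ((((⌊x⌋ : ℤ) : ZMod n).val : ℂ) / n)) *
        exp (2 * π * I / n * (Int.fract x : ℝ)) = exp (2 * π * I * x / n) := by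
  have hval := ZMod.toCircle_apply (N := n) (⌊x⌋ : ZMod n)
  rw [ZMod.toCircle_intCast] at hval
  rw [mul_div_assoc', ← hval, ← exp_add, Int.fract]
  congr 1
  push_cast
  ring

theorem exists_fTri_eq (n : ℕ) [NeZero n] {t : ℝ} (ht : 0 ≤ t) {z : ℂ}
    (hz : ‖z‖ = Real.sin (π / 2 * t)) :
    ∃ (i : ZMod n) (a b : ℝ), 0 ≤ a ∧ 0 ≤ b ∧ a + b = t ∧
      exp (2 * π * I * ((i.val : ℂ) / n)) * fTri n (a, b) = z := by
  set x := n * arg z / (2 * π)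
  refine ⟨⌊x⌋, t * (1 - Int.fract x), t * Int.fract x,
    mul_nonneg ht (sub_nonneg.mpr (Int.fract_lt_one x).le), mul_nonneg ht (Int.fract_nonneg x),
    by ring, ?_⟩
  have hn : (n : ℂ) ≠ 0 := NeZero.ne _
  have hangle : 2 * π * I * (x : ℂ) / n = arg z * I := by
    simp only [x]; push_cast; field_simp
  rw [fTri_mul_one_sub_mul, ← hz, mul_left_comm, exp_zmod_val_mul_exp_fract, hangle,
    norm_mul_exp_arg_mul_I]

theorem exists_sin_eq_and_sin_one_sub_eq {r r' : ℝ} (hr : 0 ≤ r) (hr' : 0 ≤ r')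
    (h : r ^ 2 + r' ^ 2 = 1) :
    ∃ t : ℝ, 0 ≤ t ∧ t ≤ 1 ∧ Real.sin (π / 2 * t) = r ∧ Real.sin (π / 2 * (1 - t)) = r' := by
  have hr1 : r ≤ 1 := by nlinarith
  have harcsin : π / 2 * (2 / π * Real.arcsin r) = Real.arcsin r := by
    field_simp
  refine ⟨2 / π * Real.arcsin r, by positivity [Real.arcsin_nonneg.mpr hr], ?_, ?_, ?_⟩
  · rw [div_mul_eq_mul_div, div_le_one Real.pi_pos]
    linarith [Real.arcsin_le_pi_div_two r]
  · rw [harcsin, Real.sin_arcsin (by linarith) hr1]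
  · rw [mul_one_sub, harcsin, Real.sin_pi_div_two_sub, Real.cos_arcsin,
      show 1 - r ^ 2 = r' ^ 2 by linarith, Real.sqrt_sq hr']

section consecutivePair

variable {n : ℕ}

def consecutivePair (i : ZMod n) (a b : ℝ) : ZMod n → ℝ :=
  Pi.single i a + Pi.single (i + 1) b

variable (i : ZMod n) (a b : ℝ)

theorem consecutivePair_apply_self [Nontrivial (ZMod n)] : consecutivePair i a b i = a := by
  simp [consecutivePair]

theorem consecutivePair_apply_add_one [Nontrivial (ZMod n)] :
    consecutivePair i a b (i + 1) = b := by
  simp [consecutivePair]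

theorem eq_or_eq_add_one_of_consecutivePair_ne_zero {k : ZMod n}
    (hk : consecutivePair i a b k ≠ 0) : k = i ∨ k = i + 1 := by
  contrapose! hk
  simp [consecutivePair, hk.1, hk.2]

theorem consecutivePair_nonneg (ha : 0 ≤ a) (hb : 0 ≤ b) : 0 ≤ consecutivePair i a b :=
  add_nonneg (Pi.single_nonneg.mpr ha) (Pi.single_nonneg.mpr hb)

theorem sum_consecutivePair [NeZero n] : ∑ k, consecutivePair i a b k = a + b := by
  simp [consecutivePair, Finset.sum_add_distrib]

end consecutivePair

section pairPoint

variable {n : ℕ} (i : Fin 2 → ZMod n) (a b : Fin 2 → ℝ)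

def pairPoint : Fin 2 × ZMod n → ℝ :=
  Function.uncurry fun μ ↦ consecutivePair (i μ) (a μ) (b μ)

theorem adm_pairPoint (μ : Fin 2) : Adm n (pairPoint i a b) μ (i μ) :=
  fun _ ↦ eq_or_eq_add_one_of_consecutivePair_ne_zero _ _ _

theorem pairPoint_mem_Ln [NeZero n] (ha : 0 ≤ a) (hb : 0 ≤ b) (hsum : ∑ μ, (a μ + b μ) = 1) :
    pairPoint i a b ∈ Ln n :=
  ⟨fun p ↦ consecutivePair_nonneg _ _ _ (ha p.1) (hb p.1) p.2,
    by simp only [pairPoint, Fintype.sum_prod_type, Function.uncurry_apply_pair,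
      sum_consecutivePair, hsum],
    fun μ ↦ ⟨i μ, adm_pairPoint i a b μ⟩⟩

theorem Fcomp_pairPoint [NeZero n] [Nontrivial (ZMod n)] (μ : Fin 2) :
    Fcomp n (pairPoint i a b) μ (i μ)
      = exp (2 * π * I * (((i μ).val : ℂ) / n)) * fTri n (a μ, b μ) := by
  simp only [Fcomp, pairPoint, Function.uncurry_apply_pair, consecutivePair_apply_self,
    consecutivePair_apply_add_one]

end pairPoint

/-- the map `F_n : L_n → S³` is surjective: every point `(z,w)` with
`|z|² + |w|² = 1` is a value of `F_n`. -/
theorem Fn_surjective (n : ℕ) [NeZero n] (hn : 3 ≤ n) :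
    ∀ z w : ℂ, ‖z‖ ^ 2 + ‖w‖ ^ 2 = 1 →
      ∃ Y ∈ Ln n, ∃ i j : ZMod n, Adm n Y 0 i ∧ Adm n Y 1 j ∧
        Fcomp n Y 0 i = z ∧ Fcomp n Y 1 j = w := by
  intro z w hzw
  obtain ⟨t, ht₀, ht₁, hz, hw⟩ :=
    exists_sin_eq_and_sin_one_sub_eq (norm_nonneg z) (norm_nonneg w) hzw
  obtain ⟨i, a₁, b₁, ha₁, hb₁, hab₁, hi⟩ := exists_fTri_eq n ht₀ hz.symm
  obtain ⟨j, a₂, b₂, ha₂, hb₂, hab₂, hj⟩ := exists_fTri_eq n (sub_nonneg.mpr ht₁) hw.symm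
  have : Fact (1 < n) := ⟨by omega⟩
  refine ⟨pairPoint ![i, j] ![a₁, a₂] ![b₁, b₂], pairPoint_mem_Ln _ _ _ ?_ ?_ ?_, i, j,
    adm_pairPoint _ _ _ 0, adm_pairPoint _ _ _ 1, ?_, ?_⟩
  · intro μ; fin_cases μ <;> assumption
  · intro μ; fin_cases μ <;> assumption
  · simp [hab₁, hab₂]
  · exact (Fcomp_pairPoint _ _ _ 0).trans hi
  · exact (Fcomp_pairPoint _ _ _ 1).trans hj
end
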